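/- Let A be a local Noetherian k-algebra with maximal ideal 𝔪 and residue field k, and M a finitely generated A-module. Then M is free over A if and only if dim_k(M ⊗_A A/𝔪ⁿ) = dim_k(A/𝔪ⁿ) · dim_k(M ⊗_A k) for all n ≥ 1. -/

import Mathlib

/-!
If `M ≅ Aʳ` then `M/𝔪ⁿM ≅ (A/𝔪ⁿ)ʳ`, and `dim_k (A/𝔪) = 1` because the residue field is `k`.
Conversely, lifting a `k`-basis of `M/𝔪M` gives, by Nakayama, a surjection `f : Aʳ → M`. The
induced map `Aʳ/𝔪ⁿAʳ → M/𝔪ⁿM` is a surjection between `k`-spaces of the same dimension, hence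
injective, so `ker f ⊆ 𝔪ⁿAʳ` for all `n`, and Krull's intersection theorem gives `ker f = 0`.
-/

open IsLocalRing Module
open scoped TensorProduct

section
variable {k A : Type*} [Field k] [CommRing A] [Algebra k A]
  {M : Type*} [AddCommGroup M] [Module A M] [Module k M] [IsScalarTower k A M]

theorem finiteDimensional_quotient_smul_top [Module.Finite A M] (I : Ideal A)
    [FiniteDimensional k (A ⧸ I)] : FiniteDimensional k (M ⧸ (I • ⊤ : Submodule A M)) :=
  have : Module.Finite k ((A ⧸ I) ⊗[A] M) := .trans (A ⧸ I) _
  .equiv ((TensorProduct.quotTensorEquivQuotSMul M I).restrictScalars k)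

theorem finrank_quotient_smul_top_eq {ι : Type*} [Fintype ι] (b : Basis ι A M) (I : Ideal A)
    [FiniteDimensional k (A ⧸ I)] :
    finrank k (M ⧸ (I • ⊤ : Submodule A M)) = finrank k (A ⧸ I) * Fintype.card ι := by
  rw [← ((TensorProduct.quotTensorEquivQuotSMul M I).restrictScalars k).finrank_eq,
    finrank_eq_card_basis
      ((finBasis k (A ⧸ I)).smulTower (Algebra.TensorProduct.basis (A ⧸ I) b)),
    Fintype.card_prod, Fintype.card_fin]

theorem ker_le_smul_top_of_finrank_quotient_eq {N : Type*} [AddCommGroup N] [Module A N]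
    [Module k N] [IsScalarTower k A N] [Module.Finite A N] (I : Ideal A)
    [FiniteDimensional k (A ⧸ I)] (f : N →ₗ[A] M) (hf : Function.Surjective f)
    (h : finrank k (N ⧸ (I • ⊤ : Submodule A N)) =
      finrank k (M ⧸ (I • ⊤ : Submodule A M))) :
    LinearMap.ker f ≤ I • ⊤ := by
  have := Module.Finite.of_surjective f hf
  have := finiteDimensional_quotient_smul_top (k := k) (M := N) I
  have := finiteDimensional_quotient_smul_top (k := k) (M := M) I
  let g := Submodule.mapQ _ _ f (Submodule.smul_top_le_comap_smul_top I f)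
  have hg : Function.Surjective g := by
    rintro ⟨y⟩
    obtain ⟨x, rfl⟩ := hf y
    exact ⟨Submodule.Quotient.mk x, rfl⟩
  have hg' : Function.Injective g :=
    (LinearMap.injective_iff_surjective_of_finrank_eq_finrank (f := g.restrictScalars k) h).mpr hg
  intro x hx
  rw [← Submodule.Quotient.mk_eq_zero, ← hg'.eq_iff, map_zero]
  exact congrArg Submodule.Quotient.mk (LinearMap.mem_ker.mp hx)

theorem finrank_quotient_maximalIdeal_eq_one [IsLocalRing A]
    (hres : Function.Bijective (algebraMap k (ResidueField A))) :
    finrank k (A ⧸ maximalIdeal A) = 1 :=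
  (LinearEquiv.ofBijective (Algebra.linearMap k (ResidueField A)) hres).finrank_eq.symm.trans
    (finrank_self k)

theorem exists_surjective_fin_finrank_quotient_maximalIdeal [IsLocalRing A] [Module.Finite A M]
    [FiniteDimensional k (M ⧸ (maximalIdeal A • ⊤ : Submodule A M))] :
    ∃ f : (Fin (finrank k (M ⧸ (maximalIdeal A • ⊤ : Submodule A M))) → A) →ₗ[A] M,
      Function.Surjective f := by
  let b := finBasis k (M ⧸ (maximalIdeal A • ⊤ : Submodule A M))
  choose m hm using fun i ↦ Submodule.Quotient.mk_surjective _ (b i)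
  refine ⟨Fintype.linearCombination A m, ?_⟩
  have hmb : (maximalIdeal A • ⊤ : Submodule A M).mkQ ∘ m = b := funext hm
  rw [← LinearMap.range_eq_top, Fintype.range_linearCombination, ← map_mkQ_eq_top,
    Submodule.map_span, ← Set.range_comp, hmb, eq_top_iff]
  exact fun x _ ↦ Submodule.span_le_restrictScalars k A _ (b.span_eq ▸ Submodule.mem_top)

theorem free_of_finrank_quotient_pow_eq [IsLocalRing A] [IsNoetherianRing A] [Module.Finite A M]
    (hfd : ∀ n : ℕ, FiniteDimensional k (A ⧸ (maximalIdeal A ^ n)))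
    (h : ∀ n : ℕ, 1 ≤ n →
      finrank k (M ⧸ ((maximalIdeal A ^ n) • ⊤ : Submodule A M)) =
        finrank k (A ⧸ (maximalIdeal A ^ n)) *
          finrank k (M ⧸ ((maximalIdeal A) • ⊤ : Submodule A M))) :
    Free A M := by
  have : FiniteDimensional k (A ⧸ maximalIdeal A) := pow_one (maximalIdeal A) ▸ hfd 1
  have := finiteDimensional_quotient_smul_top (k := k) (M := M) (maximalIdeal A)
  obtain ⟨f, hf⟩ :=
    exists_surjective_fin_finrank_quotient_maximalIdeal (k := k) (A := A) (M := M)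
  have hker (n : ℕ) : LinearMap.ker f ≤ maximalIdeal A ^ (n + 1) • ⊤ := by
    have := hfd (n + 1)
    refine ker_le_smul_top_of_finrank_quotient_eq (k := k) _ f hf ?_
    rw [finrank_quotient_smul_top_eq (Pi.basisFun A _), h _ n.succ_pos, Fintype.card_fin]
  have hker_eq_bot : LinearMap.ker f = ⊥ := by
    rw [eq_bot_iff, ← Ideal.iInf_pow_smul_eq_bot_of_isLocalRing (maximalIdeal A)
      (maximalIdeal.isMaximal A).ne_top]
    exact le_iInf fun n ↦
      (hker n).trans (Submodule.smul_mono_left (Ideal.pow_le_pow_right n.le_succ))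
  exact .of_equiv (LinearEquiv.ofBijective f ⟨LinearMap.ker_eq_bot.mp hker_eq_bot, hf⟩)

end

/-- Infinitesimal criterion for freeness: a finitely generated module `M` over the local
Noetherian `k`-algebra `A` with residue field `k` is free if and only if
`dim_k (M ⊗_A A/𝔪ⁿ) = dim_k (A/𝔪ⁿ) · dim_k (M ⊗_A k)` for all `n ≥ 1`
(tensor products realized as quotients). -/
theorem free_iff_dim_eq_maximalIdeal_pow {k A M : Type*} [Field k] [CommRing A] [Algebra k A]
    [IsLocalRing A] [IsNoetherianRing A]
    [AddCommGroup M] [Module A M] [Module k M] [IsScalarTower k A M] [Module.Finite A M]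
    (hres : Function.Bijective (algebraMap k (ResidueField A)))
    (hfd : ∀ n : ℕ, FiniteDimensional k (A ⧸ (maximalIdeal A ^ n))) :
    Module.Free A M ↔ ∀ n : ℕ, 1 ≤ n →
      finrank k (M ⧸ ((maximalIdeal A ^ n) • ⊤ : Submodule A M)) =
        finrank k (A ⧸ (maximalIdeal A ^ n)) *
          finrank k (M ⧸ ((maximalIdeal A) • ⊤ : Submodule A M)) := by
  refine ⟨fun _ n _ ↦ ?_, free_of_finrank_quotient_pow_eq hfd⟩
  have := hfd n
  have : FiniteDimensional k (A ⧸ maximalIdeal A) := pow_one (maximalIdeal A) ▸ hfd 1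
  let b := Free.chooseBasis A M
  rw [finrank_quotient_smul_top_eq b, finrank_quotient_smul_top_eq b,
    finrank_quotient_maximalIdeal_eq_one hres, one_mul]
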